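/- Let E be a real inner product space, ν_x, ν_y, w unit vectors, d, H, δ > 0, ξ ∈ E with ⟨ξ, ν_y⟩ = 0, and suppose ν_x + (dH/δ)w − (1/δ)ξ = ρ ν_y for some ρ ∈ ℝ. Let Z = (H/2)d² + δd⟨w, ν_x⟩. Then ρ² = 1 + (2H/δ²)Z − (1/δ²)‖ξ‖², and in particular if Z ≥ 0 and ‖ξ‖² ≤ 2HZ then ρ² ≥ 1. -/

import Mathlib

/-!
Write `ν_x + (dH/δ) w = ρ ν_y + ξ/δ`. Since `ξ ⟂ ν_y`, Pythagoras gives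
`ρ² = ‖ν_x + (dH/δ) w‖² - ‖ξ‖²/δ²`, and expanding the first norm with `‖ν_x‖ = ‖w‖ = 1`
yields `1 + (2H/δ²) Z`. The inequality `ρ² ≥ 1` is then the sign of `(2HZ - ‖ξ‖²)/δ²`.
-/

open InnerProductSpace

section

variable {E : Type*} [NormedAddCommGroup E] [InnerProductSpace ℝ E]

lemma sq_eq_norm_sq_sub_norm_sq_of_sub_eq_smul {u c n : E} {ρ : ℝ} (hn : ‖n‖ = 1)
    (hc : ⟪c, n⟫_ℝ = 0) (h : u - c = ρ • n) : ρ ^ 2 = ‖u‖ ^ 2 - ‖c‖ ^ 2 := by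
  have horth : ⟪u - c, c⟫_ℝ = 0 := by
    rw [h, real_inner_smul_left, real_inner_comm, hc, mul_zero]
  have hpyth := norm_add_sq_eq_norm_sq_add_norm_sq_real horth
  rw [sub_add_cancel, h, norm_smul, hn, mul_one, Real.norm_eq_abs, abs_mul_abs_self] at hpyth
  linear_combination -hpyth

lemma norm_add_smul_sq_of_norm_eq_one {x w : E} (hx : ‖x‖ = 1) (hw : ‖w‖ = 1) (t : ℝ) :
    ‖x + t • w‖ ^ 2 = 1 + 2 * t * ⟪w, x⟫_ℝ + t ^ 2 := by
  rw [norm_add_sq_real, hx, real_inner_smul_right, real_inner_comm, norm_smul, hw,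
    Real.norm_eq_abs, mul_one, sq_abs]
  ring

end

theorem stmt_15_general {E : Type*} [NormedAddCommGroup E] [InnerProductSpace ℝ E]
    (νx νy w : E) (hνx : ‖νx‖ = 1) (hνy : ‖νy‖ = 1) (hw : ‖w‖ = 1)
    (d H δ : ℝ)
    (ξ : E) (hξ : ⟪ξ, νy⟫_ℝ = 0) (ρ : ℝ)
    (hrel : νx + (d * H / δ) • w - (1 / δ) • ξ = ρ • νy)
    (Z : ℝ) (hZ : Z = (H / 2) * d ^ 2 + δ * d * ⟪w, νx⟫_ℝ) :
    ρ ^ 2 = 1 + (2 * H / δ ^ 2) * Z - (1 / δ ^ 2) * ‖ξ‖ ^ 2 ∧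
      (0 ≤ Z → ‖ξ‖ ^ 2 ≤ 2 * H * Z → 1 ≤ ρ ^ 2) := by
  have hξ' : ⟪(1 / δ) • ξ, νy⟫_ℝ = 0 := by rw [real_inner_smul_left, hξ, mul_zero]
  have hρ := sq_eq_norm_sq_sub_norm_sq_of_sub_eq_smul hνy hξ' hrel
  rw [norm_add_smul_sq_of_norm_eq_one hνx hw, norm_smul, Real.norm_eq_abs, mul_pow, sq_abs]
    at hρ
  have hcancel : δ / (δ * δ) = δ⁻¹ := div_self_mul_self' δ
  have hidentity : ρ ^ 2 = 1 + (2 * H / δ ^ 2) * Z - (1 / δ ^ 2) * ‖ξ‖ ^ 2 := by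
    rw [hρ, hZ]
    linear_combination (-2 * d * H * ⟪w, νx⟫_ℝ) * hcancel
  refine ⟨hidentity, fun _ hle => ?_⟩
  have hgap : 0 ≤ (2 * H * Z - ‖ξ‖ ^ 2) / δ ^ 2 := div_nonneg (by linarith) (sq_nonneg δ)
  rw [hidentity]
  linarith [show (2 * H * Z - ‖ξ‖ ^ 2) / δ ^ 2 = 2 * H / δ ^ 2 * Z - 1 / δ ^ 2 * ‖ξ‖ ^ 2 by ring]

theorem stmt_15 {E : Type*} [NormedAddCommGroup E] [InnerProductSpace ℝ E]
    (νx νy w : E) (hνx : ‖νx‖ = 1) (hνy : ‖νy‖ = 1) (hw : ‖w‖ = 1)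
    (d H δ : ℝ) (hd : 0 < d) (hH : 0 < H) (hδ : 0 < δ)
    (ξ : E) (hξ : ⟪ξ, νy⟫_ℝ = 0) (ρ : ℝ)
    (hrel : νx + (d * H / δ) • w - (1 / δ) • ξ = ρ • νy)
    (Z : ℝ) (hZ : Z = (H / 2) * d ^ 2 + δ * d * ⟪w, νx⟫_ℝ) :
    ρ ^ 2 = 1 + (2 * H / δ ^ 2) * Z - (1 / δ ^ 2) * ‖ξ‖ ^ 2 ∧
      (0 ≤ Z → ‖ξ‖ ^ 2 ≤ 2 * H * Z → 1 ≤ ρ ^ 2) :=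
  stmt_15_general νx νy w hνx hνy hw d H δ ξ hξ ρ hrel Z hZ
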